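/- arXiv:1801.05221 — 6 statements merged into one kernel-verified Lean document; each statement's English description precedes it below -/
import Mathlib

section
/- Let X and Y be real Banach spaces and let F be Fréchet differentiable at every point of the open ball B = B(x₀, ρ) and satisfy the tangential cone condition there with constant 0 ≤ c_tc < 1. Then there exists a point x ∈ B with F'(x) = 0 if and only if F is constant on B (and in that case F'(x) = 0 for every x ∈ B). -/
/-- Under the tangential cone condition on an open ball `B(x₀, ρ)` with constant
`0 ≤ c_tc < 1`, there is a point of the ball where the Fréchet derivative vanishes
iff `F` is constant on the ball, and in that case the derivative vanishes everywhere
on the ball. -/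
theorem tangential_cone_derivative_zero_iff_constant
    {X Y : Type*} [NormedAddCommGroup X] [NormedSpace ℝ X] [CompleteSpace X]
    [NormedAddCommGroup Y] [NormedSpace ℝ Y] [CompleteSpace Y]
    (F : X → Y) (F' : X → X →L[ℝ] Y) (x₀ : X) (ρ : ℝ) (hρ : 0 < ρ)
    (hdiff : ∀ x ∈ Metric.ball x₀ ρ, HasFDerivAt F (F' x) x)
    (ctc : ℝ) (hctc0 : 0 ≤ ctc) (hctc1 : ctc < 1)
    (htcc : ∀ x ∈ Metric.ball x₀ ρ, ∀ x' ∈ Metric.ball x₀ ρ,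
      ‖F x - F x' - F' x (x - x')‖ ≤ ctc * ‖F x - F x'‖) :
    ((∃ x ∈ Metric.ball x₀ ρ, F' x = 0) ↔
      ∀ x ∈ Metric.ball x₀ ρ, ∀ x' ∈ Metric.ball x₀ ρ, F x = F x') ∧
    ((∀ x ∈ Metric.ball x₀ ρ, ∀ x' ∈ Metric.ball x₀ ρ, F x = F x') →
      ∀ x ∈ Metric.ball x₀ ρ, F' x = 0) := by
  have hconst_deriv : (∀ x ∈ Metric.ball x₀ ρ, ∀ x' ∈ Metric.ball x₀ ρ, F x = F x') →
      ∀ x ∈ Metric.ball x₀ ρ, F' x = 0 := by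
    intro hconst x hx
    have hzero : HasFDerivAt F (0 : X →L[ℝ] Y) x := by
      have : F =ᶠ[nhds x] fun _ => F x := by
        filter_upwards [Metric.isOpen_ball.mem_nhds hx] with y hy
        exact hconst y hy x hx
      exact (hasFDerivAt_const (F x) x).congr_of_eventuallyEq this
    exact (hdiff x hx).unique hzero
  constructor
  · constructor
    · rintro ⟨x, hx, hFx⟩ y hy z hz
      have h1 := htcc x hx y hy
      have h2 := htcc x hx z hz
      rw [hFx] at h1 h2
      simp only [ContinuousLinearMap.zero_apply, sub_zero] at h1 h2
      have e1 : F x = F y := by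
        by_contra hne
        have : ‖F x - F y‖ < ‖F x - F y‖ :=
          lt_of_le_of_lt h1 (by nlinarith [norm_pos_iff.mpr (sub_ne_zero.mpr hne)])
        exact lt_irrefl _ this
      have e2 : F x = F z := by
        by_contra hne
        have : ‖F x - F z‖ < ‖F x - F z‖ :=
          lt_of_le_of_lt h2 (by nlinarith [norm_pos_iff.mpr (sub_ne_zero.mpr hne)])
        exact lt_irrefl _ this
      rw [← e1, ← e2]
    · intro hconst
      exact ⟨x₀, Metric.mem_ball_self hρ, hconst_deriv hconst x₀ (Metric.mem_ball_self hρ)⟩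
  · exact hconst_deriv
end

section
/- Let F satisfy the tangential cone condition on B with constant 0 ≤ c_tc < 1, let y, y^δ ∈ Y with ‖y − y^δ‖ ≤ δ for some δ ≥ 0, and let z ∈ B satisfy F(z) = y. Then for every x ∈ B and every continuous linear functional w ∈ Y*, one has |w(F'(x)(z − x)) + w(F(x) − y^δ)| ≤ ‖w‖·(δ + c_tc(‖F(x) − y^δ‖ + δ)). In other words, every solution z of F(x) = y in B lies in the stripe {v ∈ X : |⟨u*, v⟩ − α| ≤ ξ}, where u* = w ∘ F'(x), α = ⟨u*, x⟩ − w(F(x) − y^δ) and ξ = (δ + c_tc(‖F(x) − y^δ‖ + δ))‖w‖. -/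
/-! Since `F z = y`, the vector `F' x (z - x) + (F x - yδ)` is the linearization error
`F x - F z - F' x (x - z)` plus the noise `y - yδ`. The cone condition bounds the former by
`c_tc ‖F x - y‖ ≤ c_tc (‖F x - yδ‖ + δ)`, and `|w v| ≤ ‖w‖ ‖v‖` finishes. -/

theorem norm_linearized_residual_le {X Y : Type*} [NormedAddCommGroup X] [NormedSpace ℝ X]
    [NormedAddCommGroup Y] [NormedSpace ℝ Y] {F : X → Y} {A : X →L[ℝ] Y} {x z : X} {y yδ : Y}
    {c δ : ℝ} (hc : 0 ≤ c) (hcone : ‖F x - F z - A (x - z)‖ ≤ c * ‖F x - F z‖)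
    (hnoise : ‖y - yδ‖ ≤ δ) (hFz : F z = y) :
    ‖A (z - x) + (F x - yδ)‖ ≤ δ + c * (‖F x - yδ‖ + δ) := by
  subst hFz
  have hsplit : A (z - x) + (F x - yδ) = (F x - F z - A (x - z)) + (F z - yδ) := by
    rw [← neg_sub x z, map_neg]; abel
  have hdata : ‖F x - F z‖ ≤ ‖F x - yδ‖ + δ := by
    calc ‖F x - F z‖ ≤ ‖F x - yδ‖ + ‖yδ - F z‖ := norm_sub_le_norm_sub_add_norm_sub _ _ _
      _ ≤ ‖F x - yδ‖ + δ := by rw [norm_sub_rev yδ]; gcongr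
  calc ‖A (z - x) + (F x - yδ)‖
      ≤ ‖F x - F z - A (x - z)‖ + ‖F z - yδ‖ := hsplit ▸ norm_add_le _ _
    _ ≤ c * (‖F x - yδ‖ + δ) + δ := by gcongr; exact hcone.trans (by gcongr)
    _ = δ + c * (‖F x - yδ‖ + δ) := add_comm _ _

theorem solution_in_stripe_general
    {X Y : Type*} [NormedAddCommGroup X] [NormedSpace ℝ X]
    [NormedAddCommGroup Y] [NormedSpace ℝ Y]
    (F : X → Y) (F' : X → X →L[ℝ] Y) (x₀ : X) (ρ : ℝ)
    (ctc : ℝ) (hctc0 : 0 ≤ ctc)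
    (htcc : ∀ x ∈ Metric.ball x₀ ρ, ∀ x' ∈ Metric.ball x₀ ρ,
      ‖F x - F x' - F' x (x - x')‖ ≤ ctc * ‖F x - F x'‖)
    (y yδ : Y) (δ : ℝ) (hnoise : ‖y - yδ‖ ≤ δ)
    (z : X) (hz : z ∈ Metric.ball x₀ ρ) (hFz : F z = y)
    (x : X) (hx : x ∈ Metric.ball x₀ ρ) (w : StrongDual ℝ Y) :
    |w (F' x (z - x)) + w (F x - yδ)| ≤ ‖w‖ * (δ + ctc * (‖F x - yδ‖ + δ)) :=
  calc |w (F' x (z - x)) + w (F x - yδ)| = ‖w (F' x (z - x) + (F x - yδ))‖ := by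
        rw [map_add, Real.norm_eq_abs]
    _ ≤ ‖w‖ * ‖F' x (z - x) + (F x - yδ)‖ := w.le_opNorm _
    _ ≤ ‖w‖ * (δ + ctc * (‖F x - yδ‖ + δ)) := by
        gcongr
        exact norm_linearized_residual_le hctc0 (htcc x hx z hz) hnoise hFz

/-- Every solution `z ∈ B` of `F(x) = y` lies in the stripe determined by a point
`x ∈ B`, a dual element `w ∈ Y*`, and noisy data `y^δ` with `‖y − y^δ‖ ≤ δ`. -/
theorem solution_in_stripe
    {X Y : Type*} [NormedAddCommGroup X] [NormedSpace ℝ X] [CompleteSpace X]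
    [NormedAddCommGroup Y] [NormedSpace ℝ Y] [CompleteSpace Y]
    (F : X → Y) (F' : X → X →L[ℝ] Y) (x₀ : X) (ρ : ℝ)
    (hdiff : ∀ x ∈ Metric.ball x₀ ρ, HasFDerivAt F (F' x) x)
    (ctc : ℝ) (hctc0 : 0 ≤ ctc) (hctc1 : ctc < 1)
    (htcc : ∀ x ∈ Metric.ball x₀ ρ, ∀ x' ∈ Metric.ball x₀ ρ,
      ‖F x - F x' - F' x (x - x')‖ ≤ ctc * ‖F x - F x'‖)
    (y yδ : Y) (δ : ℝ) (hδ : 0 ≤ δ) (hnoise : ‖y - yδ‖ ≤ δ)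
    (z : X) (hz : z ∈ Metric.ball x₀ ρ) (hFz : F z = y)
    (x : X) (hx : x ∈ Metric.ball x₀ ρ) (w : StrongDual ℝ Y) :
    |w (F' x (z - x)) + w (F x - yδ)| ≤ ‖w‖ * (δ + ctc * (‖F x - yδ‖ + δ)) :=
  solution_in_stripe_general F F' x₀ ρ ctc hctc0 htcc y yδ δ hnoise z hz hFz x hx w
end

section
/- Let X be a real Banach space, p > 1 with conjugate exponent p*, let j_p : X → X* be a selection of the duality mapping, j_q : X* → X an inverse duality selection, and suppose X* is p*-smooth with constant G > 0 relative to j_q. Let u* ∈ X* with u* ≠ 0, β ∈ ℝ, and x, z ∈ X with ⟨u*, x⟩ ≥ β and ⟨u*, z⟩ ≤ β. Set t̃ := ((⟨u*, x⟩ − β)/(G‖u*‖^{p*}))^{p−1} and x̃ := j_q(j_p(x) − t̃·u*). Then D_p(x̃, z) ≤ D_p(x, z) − (1/(p·G^{p−1}))·((⟨u*, x⟩ − β)/‖u*‖)^p. -/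
/-- The Bregman distance associated with a selection `jp` of the duality mapping
`J_p^X`:  `D_p(x, x̃) = (1/p)‖x̃‖^p − (1/p)‖x‖^p − ⟨jp x, x̃ − x⟩`. -/
noncomputable def bregmanDist {X : Type*} [NormedAddCommGroup X] [NormedSpace ℝ X]
    (p : ℝ) (jp : X → StrongDual ℝ X) (x x' : X) : ℝ :=
  (1 / p) * ‖x'‖ ^ p - (1 / p) * ‖x‖ ^ p - jp x (x' - x)

/-! In dual form `D_p(x, z) = ‖jp x‖^{p*}/p* − ⟨jp x, z⟩ + ‖z‖^p/p`, the step
`x ↦ jq (jp x − t u*)` moves the dual point by `−t u*`, so `p*`-smoothness bounds the new distance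
by `D_p(x, z) − t(⟨u*, x⟩ − ⟨u*, z⟩) + (G/p*)(t‖u*‖)^{p*}`. As `⟨u*, z⟩ ≤ β`, the decrease is at
least `t a − (c/p*) t^{p*}` with `a = ⟨u*, x⟩ − β` and `c = G‖u*‖^{p*}`; the step
`t̃ = (a/c)^{p−1}` is where Young's inequality becomes an equality, giving the decrease
`(c/p)(a/c)^p = (a/‖u*‖)^p / (p G^{p−1})`. -/

namespace Real.HolderConjugate

variable {p q : ℝ} (hpq : p.HolderConjugate q)
include hpq

theorem rpow_sub_one_mul_sub_rpow_eq {a c : ℝ} (ha : 0 ≤ a) (hc : 0 ≤ c) :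
    (a / c) ^ (p - 1) * a - c / q * ((a / c) ^ (p - 1)) ^ q = c / p * (a / c) ^ p := by
  have hac : 0 ≤ a / c := div_nonneg ha hc
  have h_step : (a / c) ^ (p - 1) * a = c * (a / c) ^ p := by
    rcases hc.eq_or_lt with rfl | hc
    · simp [Real.zero_rpow hpq.sub_one_ne_zero]
    · rw [← sub_add_cancel p 1, Real.rpow_add_one' hac (by simpa using hpq.ne_zero),
        add_sub_cancel_right]
      field_simp
  rw [← Real.rpow_mul hac, hpq.sub_one_mul_conj, h_step]
  linear_combination -(c * (a / c) ^ p) * hpq.one_div_add_one_div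

theorem mul_rpow_div_mul_rpow_eq {a G n : ℝ} (ha : 0 ≤ a) (hG : 0 < G) (hn : 0 ≤ n) :
    G * n ^ q * (a / (G * n ^ q)) ^ p = (a / n) ^ p / G ^ (p - 1) := by
  rcases hn.eq_or_lt with rfl | hn
  · simp [Real.zero_rpow hpq.symm.ne_zero, Real.zero_rpow hpq.ne_zero]
  have hc : 0 < G * n ^ q := by positivity
  have hcp : (G * n ^ q) ^ p / (G * n ^ q) = G ^ (p - 1) * n ^ p := by
    rw [← Real.rpow_sub_one hc.ne', Real.mul_rpow hG.le (Real.rpow_nonneg hn.le _),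
      ← Real.rpow_mul hn.le, mul_comm q, hpq.sub_one_mul_conj]
  calc G * n ^ q * (a / (G * n ^ q)) ^ p = a ^ p / ((G * n ^ q) ^ p / (G * n ^ q)) := by
        rw [Real.div_rpow ha hc.le]; field_simp
    _ = (a / n) ^ p / G ^ (p - 1) := by
        rw [hcp, Real.div_rpow ha hn.le]; ring

end Real.HolderConjugate

section Bregman

variable {X : Type*} [NormedAddCommGroup X] [NormedSpace ℝ X] {p q : ℝ}
  {jp : X → StrongDual ℝ X}

theorem bregmanDist_eq_of_duality (hpq : p.HolderConjugate q) {x : X}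
    (hx : jp x x = ‖x‖ ^ p) (hnorm : ‖jp x‖ = ‖x‖ ^ (p - 1)) (z : X) :
    bregmanDist p jp x z = 1 / q * ‖jp x‖ ^ q - jp x z + 1 / p * ‖z‖ ^ p := by
  have hnorm_q : ‖jp x‖ ^ q = ‖x‖ ^ p := by
    rw [hnorm, ← Real.rpow_mul (norm_nonneg x), hpq.sub_one_mul_conj]
  rw [bregmanDist, map_sub, hx, hnorm_q]
  linear_combination -‖x‖ ^ p * hpq.one_div_add_one_div

theorem bregmanDist_jq_sub_smul_le (hpq : p.HolderConjugate q) {jq : StrongDual ℝ X → X}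
    (hjp : ∀ v : X, jp v v = ‖v‖ ^ p ∧ ‖jp v‖ = ‖v‖ ^ (p - 1))
    (hinv1 : ∀ xs : StrongDual ℝ X, jp (jq xs) = xs) (hinv2 : ∀ x : X, jq (jp x) = x) {G : ℝ}
    (hsmooth : ∀ xs ys : StrongDual ℝ X,
      (1 / q) * ‖xs - ys‖ ^ q ≤ (1 / q) * ‖xs‖ ^ q - ys (jq xs) + (G / q) * ‖ys‖ ^ q)
    (us : StrongDual ℝ X) {t : ℝ} (ht : 0 ≤ t) (x z : X) :
    bregmanDist p jp (jq (jp x - t • us)) z ≤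
      bregmanDist p jp x z - t * (us x - us z) + G / q * (t * ‖us‖) ^ q := by
  have hsmooth_x := hsmooth (jp x) (t • us)
  rw [hinv2, norm_smul, Real.norm_of_nonneg ht] at hsmooth_x
  rw [bregmanDist_eq_of_duality hpq (hjp _).1 (hjp _).2, hinv1,
    bregmanDist_eq_of_duality hpq (hjp x).1 (hjp x).2]
  simp only [sub_apply, smul_apply, smul_eq_mul] at hsmooth_x ⊢
  linarith

end Bregman

theorem bregman_projection_halfspace_descent_general
    {X : Type*} [NormedAddCommGroup X] [NormedSpace ℝ X]
    (p q : ℝ) (hp : 1 < p) (hpq : 1 / p + 1 / q = 1)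
    (jp : X → StrongDual ℝ X) (jq : StrongDual ℝ X → X)
    (hjp : ∀ v : X, jp v v = ‖v‖ ^ p ∧ ‖jp v‖ = ‖v‖ ^ (p - 1))
    (hinv1 : ∀ xs : StrongDual ℝ X, jp (jq xs) = xs)
    (hinv2 : ∀ x : X, jq (jp x) = x)
    (G : ℝ) (hG : 0 < G)
    (hsmooth : ∀ xs ys : StrongDual ℝ X,
      (1 / q) * ‖xs - ys‖ ^ q ≤ (1 / q) * ‖xs‖ ^ q - ys (jq xs) + (G / q) * ‖ys‖ ^ q)
    (us : StrongDual ℝ X) (β : ℝ) (x z : X)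
    (hx : β ≤ us x) (hz : us z ≤ β) :
    bregmanDist p jp (jq (jp x - (((us x - β) / (G * ‖us‖ ^ q)) ^ (p - 1)) • us)) z ≤
      bregmanDist p jp x z - (1 / (p * G ^ (p - 1))) * ((us x - β) / ‖us‖) ^ p := by
  have hpq' : p.HolderConjugate q := Real.holderConjugate_iff.mpr ⟨hp, by simpa using hpq⟩
  set a := us x - β
  set c := G * ‖us‖ ^ q
  set t := (a / c) ^ (p - 1)
  have ha : 0 ≤ a := sub_nonneg.2 hx
  have ht : 0 ≤ t := by positivity
  have hgain := hpq'.rpow_sub_one_mul_sub_rpow_eq ha (by positivity : 0 ≤ c)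
  have hscale := hpq'.mul_rpow_div_mul_rpow_eq ha hG (norm_nonneg us)
  have hpow : G / q * (t * ‖us‖) ^ q = c / q * t ^ q := by
    rw [Real.mul_rpow ht (norm_nonneg us)]; ring
  calc _ ≤ bregmanDist p jp x z - t * (us x - us z) + G / q * (t * ‖us‖) ^ q :=
        bregmanDist_jq_sub_smul_le hpq' hjp hinv1 hinv2 hsmooth us ht x z
    _ ≤ bregmanDist p jp x z - (t * a - c / q * t ^ q) := by
        linarith [mul_nonneg ht (sub_nonneg.2 hz)]
    _ = _ := by
        rw [hgain, div_mul_eq_mul_div, hscale]; ring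

/-- Descent property of the Bregman projection step onto the halfspace
`{v : ⟨u*, v⟩ ≤ β}` with the explicit step size `t̃`, in a space whose dual is
`p*`-smooth with constant `G`. -/
theorem bregman_projection_halfspace_descent
    {X : Type*} [NormedAddCommGroup X] [NormedSpace ℝ X] [CompleteSpace X]
    (p q : ℝ) (hp : 1 < p) (hpq : 1 / p + 1 / q = 1)
    (jp : X → StrongDual ℝ X) (jq : StrongDual ℝ X → X)
    (hjp : ∀ v : X, jp v v = ‖v‖ ^ p ∧ ‖jp v‖ = ‖v‖ ^ (p - 1))
    (hinv1 : ∀ xs : StrongDual ℝ X, jp (jq xs) = xs)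
    (hinv2 : ∀ x : X, jq (jp x) = x)
    (G : ℝ) (hG : 0 < G)
    (hsmooth : ∀ xs ys : StrongDual ℝ X,
      (1 / q) * ‖xs - ys‖ ^ q ≤ (1 / q) * ‖xs‖ ^ q - ys (jq xs) + (G / q) * ‖ys‖ ^ q)
    (us : StrongDual ℝ X) (hus : us ≠ 0) (β : ℝ) (x z : X)
    (hx : β ≤ us x) (hz : us z ≤ β) :
    bregmanDist p jp (jq (jp x - (((us x - β) / (G * ‖us‖ ^ q)) ^ (p - 1)) • us)) z ≤
      bregmanDist p jp x z - (1 / (p * G ^ (p - 1))) * ((us x - β) / ‖us‖) ^ p :=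
  bregman_projection_halfspace_descent_general p q hp hpq jp jq hjp hinv1 hinv2 G hG hsmooth us β x
    z hx hz
end

section
/- Let F satisfy the tangential cone condition on B with constant 0 ≤ c_tc < 1 and ‖F'(x)‖ ≤ c_F for all x ∈ B with c_F > 0. Let p > 1, let j_p : X → X* be a selection of the duality mapping, j_q : X* → X an inverse duality selection with X* p*-smooth with constant G > 0, and let j_2 : Y → Y* be a selection of the duality mapping J_2^Y. Let x_n, z ∈ B with F(z) = y and R_n := F(x_n) − y ≠ 0. Put w := j_2(R_n), u* := w ∘ F'(x_n), α := ⟨u*, x_n⟩ − ‖R_n‖², ξ := c_tc‖R_n‖². Then: (i) ⟨u*, x_n⟩ − (α + ξ) = (1 − c_tc)‖R_n‖² > 0 (so x_n lies strictly above the stripe); (ii) ⟨u*, z⟩ ≤ α + ξ; and (iii) for t̃ := ((1 − c_tc)‖R_n‖²/(G‖u*‖^{p*}))^{p−1} and x̃ := j_q(j_p(x_n) − t̃·u*), the descent property D_p(x̃, z) ≤ D_p(x_n, z) − ((1 − c_tc)^p/(p·G^{p−1}·c_F^p))·‖R_n‖^p holds. -/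
open Real

section Step

variable {p q : ℝ}

/-- Equality case of Young's inequality: `t ↦ t S - t ^ q K / q` is maximal at `t = (S / K)ᵖ⁻¹`. -/
lemma Real.HolderConjugate.optimal_step_gain (hpq : p.HolderConjugate q) {S K : ℝ}
    (hS : 0 < S) (hK : 0 < K) :
    (S / K) ^ (p - 1) * S - 1 / q * (((S / K) ^ (p - 1)) ^ q * K) = S ^ p / (p * K ^ (p - 1)) := by
  have hSK : 0 < S / K := div_pos hS hK
  have hpq' : 1 / p + 1 / q = 1 := by simpa only [one_div] using hpq.inv_add_inv_eq_one
  have htq : ((S / K) ^ (p - 1)) ^ q * K = (S / K) ^ (p - 1) * S := by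
    rw [← rpow_mul hSK.le, hpq.sub_one_mul_conj, rpow_sub_one hSK.ne']
    field_simp
  have htS : (S / K) ^ (p - 1) * S = S ^ p / K ^ (p - 1) := by
    rw [div_rpow hS.le hK.le, div_mul_eq_mul_div, ← rpow_add_one hS.ne', sub_add_cancel]
  rw [htq, htS, mul_comm p, ← div_div]
  linear_combination -(S ^ p / K ^ (p - 1)) * hpq'

lemma Real.HolderConjugate.gain_lower_bound (hpq : p.HolderConjugate q) {a r G c n : ℝ}
    (ha : 0 ≤ a) (hr : 0 < r) (hG : 0 < G) (hn : 0 < n) (hnc : n ≤ c * r) :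
    a ^ p / (p * G ^ (p - 1) * c ^ p) * r ^ p ≤ (a * r ^ 2) ^ p / (p * (G * n ^ q) ^ (p - 1)) := by
  have hp : 0 < p := hpq.pos
  have hc : 0 < c := pos_of_mul_pos_left (hn.trans_le hnc) hr.le
  have hK : (G * n ^ q) ^ (p - 1) = G ^ (p - 1) * n ^ p := by
    rw [mul_rpow hG.le (rpow_nonneg hn.le q), ← rpow_mul hn.le, mul_comm q,
      hpq.sub_one_mul_conj]
  have hnp : n ^ p ≤ c ^ p * r ^ p := by
    rw [← mul_rpow hc.le hr.le]
    exact rpow_le_rpow hn.le hnc hp.le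
  have hS : (a * r ^ 2) ^ p = a ^ p * r ^ p * r ^ p := by
    rw [mul_rpow ha (sq_nonneg r), sq, mul_rpow hr.le hr.le, mul_assoc]
  calc a ^ p / (p * G ^ (p - 1) * c ^ p) * r ^ p
      = a ^ p * r ^ p * r ^ p / (p * G ^ (p - 1) * (c ^ p * r ^ p)) := by
        field_simp
    _ ≤ a ^ p * r ^ p * r ^ p / (p * G ^ (p - 1) * n ^ p) := by
        gcongr
    _ = (a * r ^ 2) ^ p / (p * (G * n ^ q) ^ (p - 1)) := by rw [hK, hS]; ring

end Step

section Bregman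

variable {X : Type*} [NormedAddCommGroup X] [NormedSpace ℝ X] {p q : ℝ}
  {jp : X → StrongDual ℝ X}

lemma bregmanDist_eq_of_holderConjugate (hpq : p.HolderConjugate q)
    (hjp : ∀ v : X, jp v v = ‖v‖ ^ p ∧ ‖jp v‖ = ‖v‖ ^ (p - 1)) (v z : X) :
    bregmanDist p jp v z = 1 / p * ‖z‖ ^ p + 1 / q * ‖jp v‖ ^ q - jp v z := by
  have hnorm : ‖jp v‖ ^ q = ‖v‖ ^ p := by
    rw [(hjp v).2, ← rpow_mul (norm_nonneg v), hpq.sub_one_mul_conj]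
  have hpq' : 1 / p + 1 / q = 1 := by simpa only [one_div] using hpq.inv_add_inv_eq_one
  rw [bregmanDist, map_sub, (hjp v).1, hnorm]
  linear_combination -‖v‖ ^ p * hpq'

lemma bregmanDist_dualStep_le (hpq : p.HolderConjugate q)
    (hjp : ∀ v : X, jp v v = ‖v‖ ^ p ∧ ‖jp v‖ = ‖v‖ ^ (p - 1))
    {jq : StrongDual ℝ X → X} (hinv1 : ∀ xs, jp (jq xs) = xs) (hinv2 : ∀ x, jq (jp x) = x)
    {G : ℝ} (hsmooth : ∀ xs ys : StrongDual ℝ X,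
      (1 / q) * ‖xs - ys‖ ^ q ≤ (1 / q) * ‖xs‖ ^ q - ys (jq xs) + (G / q) * ‖ys‖ ^ q)
    (x z : X) (u : StrongDual ℝ X) :
    bregmanDist p jp (jq (jp x - u)) z ≤
      bregmanDist p jp x z - u (x - z) + G / q * ‖u‖ ^ q := by
  have hsm := hsmooth (jp x) u
  rw [hinv2] at hsm
  rw [bregmanDist_eq_of_holderConjugate hpq hjp, bregmanDist_eq_of_holderConjugate hpq hjp,
    hinv1, sub_apply, map_sub]
  linarith

lemma bregmanDist_optimalDualStep_le (hpq : p.HolderConjugate q)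
    (hjp : ∀ v : X, jp v v = ‖v‖ ^ p ∧ ‖jp v‖ = ‖v‖ ^ (p - 1))
    {jq : StrongDual ℝ X → X} (hinv1 : ∀ xs, jp (jq xs) = xs) (hinv2 : ∀ x, jq (jp x) = x)
    {G : ℝ} (hG : 0 < G) (hsmooth : ∀ xs ys : StrongDual ℝ X,
      (1 / q) * ‖xs - ys‖ ^ q ≤ (1 / q) * ‖xs‖ ^ q - ys (jq xs) + (G / q) * ‖ys‖ ^ q)
    {x z : X} {u : StrongDual ℝ X} {S : ℝ} (hS : 0 < S) (hu : 0 < ‖u‖) (hgap : S ≤ u (x - z)) :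
    bregmanDist p jp (jq (jp x - (S / (G * ‖u‖ ^ q)) ^ (p - 1) • u)) z ≤
      bregmanDist p jp x z - S ^ p / (p * (G * ‖u‖ ^ q) ^ (p - 1)) := by
  set t := (S / (G * ‖u‖ ^ q)) ^ (p - 1) with ht
  have ht0 : 0 ≤ t := rpow_nonneg (by positivity) _
  calc bregmanDist p jp (jq (jp x - t • u)) z
      ≤ bregmanDist p jp x z - (t • u) (x - z) + G / q * ‖t • u‖ ^ q :=
        bregmanDist_dualStep_le hpq hjp hinv1 hinv2 hsmooth x z (t • u)
    _ ≤ bregmanDist p jp x z - (t * S - 1 / q * (t ^ q * (G * ‖u‖ ^ q))) := by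
        rw [smul_apply, smul_eq_mul, norm_smul, norm_of_nonneg ht0, mul_rpow ht0 (norm_nonneg u)]
        have hK : G / q * (t ^ q * ‖u‖ ^ q) = 1 / q * (t ^ q * (G * ‖u‖ ^ q)) := by ring
        linarith [mul_le_mul_of_nonneg_left hgap ht0]
    _ = bregmanDist p jp x z - S ^ p / (p * (G * ‖u‖ ^ q) ^ (p - 1)) := by
        rw [ht, hpq.optimal_step_gain hS (by positivity)]

end Bregman

lemma one_sub_mul_sq_le_apply_sub {Y : Type*} [NormedAddCommGroup Y] [NormedSpace ℝ Y]
    {w : StrongDual ℝ Y} {R E : Y} {c : ℝ} (hwR : w R = ‖R‖ ^ 2) (hw : ‖w‖ = ‖R‖)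
    (hE : ‖E‖ ≤ c * ‖R‖) :
    (1 - c) * ‖R‖ ^ 2 ≤ w (R - E) := by
  have hwE : w E ≤ ‖R‖ * (c * ‖R‖) :=
    calc w E ≤ ‖w E‖ := le_norm_self _
      _ ≤ ‖w‖ * ‖E‖ := w.le_opNorm E
      _ ≤ ‖R‖ * (c * ‖R‖) := by rw [hw]; exact mul_le_mul_of_nonneg_left hE (norm_nonneg R)
  rw [map_sub, hwR]
  linarith

theorem sesop_exact_data_descent_general
    {X Y : Type*} [NormedAddCommGroup X] [NormedSpace ℝ X]
    [NormedAddCommGroup Y] [NormedSpace ℝ Y]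
    (F : X → Y) (F' : X → X →L[ℝ] Y) (x₀ : X) (ρ : ℝ)
    (ctc : ℝ) (hctc1 : ctc < 1)
    (htcc : ∀ x ∈ Metric.ball x₀ ρ, ∀ x' ∈ Metric.ball x₀ ρ,
      ‖F x - F x' - F' x (x - x')‖ ≤ ctc * ‖F x - F x'‖)
    (cF : ℝ) (hFbd : ∀ x ∈ Metric.ball x₀ ρ, ‖F' x‖ ≤ cF)
    (p q : ℝ) (hp : 1 < p) (hpq : 1 / p + 1 / q = 1)
    (jp : X → StrongDual ℝ X) (jq : StrongDual ℝ X → X)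
    (hjp : ∀ v : X, jp v v = ‖v‖ ^ p ∧ ‖jp v‖ = ‖v‖ ^ (p - 1))
    (hinv1 : ∀ xs : StrongDual ℝ X, jp (jq xs) = xs)
    (hinv2 : ∀ x : X, jq (jp x) = x)
    (G : ℝ) (hG : 0 < G)
    (hsmooth : ∀ xs ys : StrongDual ℝ X,
      (1 / q) * ‖xs - ys‖ ^ q ≤ (1 / q) * ‖xs‖ ^ q - ys (jq xs) + (G / q) * ‖ys‖ ^ q)
    (j2 : Y → StrongDual ℝ Y)
    (hj2 : ∀ v : Y, j2 v v = ‖v‖ ^ 2 ∧ ‖j2 v‖ = ‖v‖)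
    (y : Y) (xn z : X) (hxn : xn ∈ Metric.ball x₀ ρ) (hz : z ∈ Metric.ball x₀ ρ)
    (hFz : F z = y) (hR : F xn - y ≠ 0)
    (w : StrongDual ℝ Y) (hw : w = j2 (F xn - y))
    (us : StrongDual ℝ X) (hus : us = w.comp (F' xn))
    (α ξ : ℝ) (hα : α = us xn - ‖F xn - y‖ ^ 2) (hξ : ξ = ctc * ‖F xn - y‖ ^ 2)
    (t : ℝ) (ht : t = ((1 - ctc) * ‖F xn - y‖ ^ 2 / (G * ‖us‖ ^ q)) ^ (p - 1))
    (x' : X) (hx' : x' = jq (jp xn - t • us)) :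
    (us xn - (α + ξ) = (1 - ctc) * ‖F xn - y‖ ^ 2 ∧ 0 < us xn - (α + ξ)) ∧
    us z ≤ α + ξ ∧
    bregmanDist p jp x' z ≤
      bregmanDist p jp xn z -
        ((1 - ctc) ^ p / (p * G ^ (p - 1) * cF ^ p)) * ‖F xn - y‖ ^ p := by
  have hpq' : p.HolderConjugate q :=
    holderConjugate_iff.mpr ⟨hp, by simpa only [one_div] using hpq⟩
  set r := ‖F xn - y‖
  set S := (1 - ctc) * r ^ 2
  have hS : 0 < S := mul_pos (sub_pos.mpr hctc1) (pow_pos (norm_pos_iff.mpr hR) 2)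
  have hgap : S ≤ us (xn - z) := by
    have hE : ‖F xn - y - F' xn (xn - z)‖ ≤ ctc * r := by simpa only [hFz] using htcc xn hxn z hz
    have hwR : w (F xn - y) = r ^ 2 := by rw [hw]; exact (hj2 _).1
    have hwn : ‖w‖ = r := by rw [hw]; exact (hj2 _).2
    simpa [hus] using one_sub_mul_sq_le_apply_sub hwR hwn hE
  have hus_le : ‖us‖ ≤ cF * r :=
    calc ‖us‖ ≤ ‖w‖ * ‖F' xn‖ := hus ▸ w.opNorm_comp_le _
      _ ≤ r * cF := by rw [hw, (hj2 _).2]; gcongr; exact hFbd xn hxn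
      _ = cF * r := mul_comm _ _
  have hus_pos : 0 < ‖us‖ := by
    refine norm_pos_iff.mpr fun h => ?_
    rw [h, zero_apply] at hgap
    linarith
  refine ⟨⟨by rw [hα, hξ]; ring, by rw [hα, hξ]; linarith⟩, ?_, ?_⟩
  · rw [map_sub] at hgap
    rw [hα, hξ]
    linarith
  calc bregmanDist p jp x' z
      ≤ bregmanDist p jp xn z - S ^ p / (p * (G * ‖us‖ ^ q) ^ (p - 1)) := by
        rw [hx', ht]
        exact bregmanDist_optimalDualStep_le hpq' hjp hinv1 hinv2 hG hsmooth hS hus_pos hgap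
    _ ≤ _ := sub_le_sub_left
        (hpq'.gain_lower_bound (sub_pos.mpr hctc1).le (norm_pos_iff.mpr hR) hG hus_pos hus_le) _

/-- Descent property of one SESOP step with the current gradient for exact data:
the iterate lies strictly above the stripe, the solution lies below its upper
bounding hyperplane, and projecting onto that hyperplane yields the descent
property in the Bregman distance. -/
theorem sesop_exact_data_descent
    {X Y : Type*} [NormedAddCommGroup X] [NormedSpace ℝ X] [CompleteSpace X]
    [NormedAddCommGroup Y] [NormedSpace ℝ Y] [CompleteSpace Y]
    (F : X → Y) (F' : X → X →L[ℝ] Y) (x₀ : X) (ρ : ℝ)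
    (hdiff : ∀ x ∈ Metric.ball x₀ ρ, HasFDerivAt F (F' x) x)
    (ctc : ℝ) (hctc0 : 0 ≤ ctc) (hctc1 : ctc < 1)
    (htcc : ∀ x ∈ Metric.ball x₀ ρ, ∀ x' ∈ Metric.ball x₀ ρ,
      ‖F x - F x' - F' x (x - x')‖ ≤ ctc * ‖F x - F x'‖)
    (cF : ℝ) (hcF : 0 < cF) (hFbd : ∀ x ∈ Metric.ball x₀ ρ, ‖F' x‖ ≤ cF)
    (p q : ℝ) (hp : 1 < p) (hpq : 1 / p + 1 / q = 1)
    (jp : X → StrongDual ℝ X) (jq : StrongDual ℝ X → X)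
    (hjp : ∀ v : X, jp v v = ‖v‖ ^ p ∧ ‖jp v‖ = ‖v‖ ^ (p - 1))
    (hinv1 : ∀ xs : StrongDual ℝ X, jp (jq xs) = xs)
    (hinv2 : ∀ x : X, jq (jp x) = x)
    (G : ℝ) (hG : 0 < G)
    (hsmooth : ∀ xs ys : StrongDual ℝ X,
      (1 / q) * ‖xs - ys‖ ^ q ≤ (1 / q) * ‖xs‖ ^ q - ys (jq xs) + (G / q) * ‖ys‖ ^ q)
    (j2 : Y → StrongDual ℝ Y)
    (hj2 : ∀ v : Y, j2 v v = ‖v‖ ^ 2 ∧ ‖j2 v‖ = ‖v‖)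
    (y : Y) (xn z : X) (hxn : xn ∈ Metric.ball x₀ ρ) (hz : z ∈ Metric.ball x₀ ρ)
    (hFz : F z = y) (hR : F xn - y ≠ 0)
    (w : StrongDual ℝ Y) (hw : w = j2 (F xn - y))
    (us : StrongDual ℝ X) (hus : us = w.comp (F' xn))
    (α ξ : ℝ) (hα : α = us xn - ‖F xn - y‖ ^ 2) (hξ : ξ = ctc * ‖F xn - y‖ ^ 2)
    (t : ℝ) (ht : t = ((1 - ctc) * ‖F xn - y‖ ^ 2 / (G * ‖us‖ ^ q)) ^ (p - 1))
    (x' : X) (hx' : x' = jq (jp xn - t • us)) :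
    (us xn - (α + ξ) = (1 - ctc) * ‖F xn - y‖ ^ 2 ∧ 0 < us xn - (α + ξ)) ∧
    us z ≤ α + ξ ∧
    bregmanDist p jp x' z ≤
      bregmanDist p jp xn z -
        ((1 - ctc) ^ p / (p * G ^ (p - 1) * cF ^ p)) * ‖F xn - y‖ ^ p :=
  sesop_exact_data_descent_general F F' x₀ ρ ctc hctc1 htcc cF hFbd p q hp hpq jp jq hjp hinv1 hinv2
    G hG hsmooth j2 hj2 y xn z hxn hz hFz hR w hw us hus α ξ hα hξ t ht x' hx'
end

section
/- Let F satisfy the tangential cone condition on B with constant 0 ≤ c_tc < 1, let y ∈ Y, and let x, x', z ∈ B with F(z) = y. Then ‖F'(x)(x' − z)‖ ≤ 2c_tc‖F(x) − y‖ + (1 + c_tc)‖F(x') − y‖. In particular, if additionally ‖F(x') − y‖ ≤ ‖F(x) − y‖, then ‖F'(x)(x' − z)‖ ≤ (1 + 3c_tc)‖F(x) − y‖. -/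
/-- Under the tangential cone condition, for points `x, x', z` of the ball with
`F(z) = y` one has `‖F'(x)(x' − z)‖ ≤ 2c_tc‖F(x) − y‖ + (1 + c_tc)‖F(x') − y‖`;
if moreover `‖F(x') − y‖ ≤ ‖F(x) − y‖`, then
`‖F'(x)(x' − z)‖ ≤ (1 + 3c_tc)‖F(x) − y‖`. -/
theorem derivative_difference_estimate
    {X Y : Type*} [NormedAddCommGroup X] [NormedSpace ℝ X] [CompleteSpace X]
    [NormedAddCommGroup Y] [NormedSpace ℝ Y] [CompleteSpace Y]
    (F : X → Y) (F' : X → X →L[ℝ] Y) (x₀ : X) (ρ : ℝ)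
    (hdiff : ∀ x ∈ Metric.ball x₀ ρ, HasFDerivAt F (F' x) x)
    (ctc : ℝ) (hctc0 : 0 ≤ ctc) (hctc1 : ctc < 1)
    (htcc : ∀ x ∈ Metric.ball x₀ ρ, ∀ x' ∈ Metric.ball x₀ ρ,
      ‖F x - F x' - F' x (x - x')‖ ≤ ctc * ‖F x - F x'‖)
    (y : Y) (x x' z : X)
    (hx : x ∈ Metric.ball x₀ ρ) (hx' : x' ∈ Metric.ball x₀ ρ)
    (hz : z ∈ Metric.ball x₀ ρ) (hFz : F z = y) :
    ‖F' x (x' - z)‖ ≤ 2 * ctc * ‖F x - y‖ + (1 + ctc) * ‖F x' - y‖ ∧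
    (‖F x' - y‖ ≤ ‖F x - y‖ → ‖F' x (x' - z)‖ ≤ (1 + 3 * ctc) * ‖F x - y‖) := by
  have hA := htcc x hx z hz
  have hB := htcc x hx x' hx'
  rw [hFz] at hA
  have key : ‖F' x (x' - z)‖ ≤ 2 * ctc * ‖F x - y‖ + (1 + ctc) * ‖F x' - y‖ := by
    have hid : F' x (x' - z) =
        (F x' - y) + (F x - F x' - F' x (x - x')) - (F x - y - F' x (x - z)) := by
      rw [map_sub, map_sub, map_sub]
      abel
    have htri : ‖F' x (x' - z)‖ ≤ ‖F x' - y‖ + ‖F x - F x' - F' x (x - x')‖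
        + ‖F x - y - F' x (x - z)‖ := by
      rw [hid]
      exact (norm_sub_le _ _).trans (by gcongr; exact norm_add_le _ _)
    have hFF : ‖F x - F x'‖ ≤ ‖F x - y‖ + ‖F x' - y‖ := by
      have : F x - F x' = (F x - y) - (F x' - y) := by abel
      rw [this]; exact norm_sub_le _ _
    nlinarith [hA, hB, norm_nonneg (F x - y), norm_nonneg (F x' - y)]
  refine ⟨key, fun hle => ?_⟩
  nlinarith [key, norm_nonneg (F x - y)]
end

section
/- Let X be a real Banach space with continuous dual X*, let q > 1, N ∈ ℕ, x* ∈ X*, u_1*, ..., u_N* ∈ X*, and α_1, ..., α_N ∈ ℝ. Then the function h : ℝ^N → ℝ defined by h(t) = (1/q)‖x* − Σ_{k=1}^N t_k u_k*‖^q + Σ_{k=1}^N t_k α_k is convex. If moreover the functionals u_1*, ..., u_N* are linearly independent and the norm of X* is strictly convex (X* is a strictly convex normed space), then h is strictly convex. -/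
/-!
The objective is `t ↦ (1/q) ‖A t‖ ^ q + L t` with `A t = x* - ∑ k, t k • u k*` affine and
`L t = ∑ k, t k * α k` linear. The power `‖·‖ ^ q` of a norm is convex for `q ≥ 1` (triangle
inequality, then convexity of `s ↦ s ^ q` on `[0, ∞)`), and strictly convex for `q > 1` on a
strictly convex space. Precomposition with `A` keeps convexity, and keeps strict convexity
when `A` is injective, which is exactly linear independence of the `u k*`.
-/

open Set

section

variable {𝕜 E F β : Type*} [Field 𝕜] [LinearOrder 𝕜]
  [AddCommGroup E] [AddCommGroup F] [Module 𝕜 E] [Module 𝕜 F]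

theorem StrictConvexOn.comp_affineMap [AddCommMonoid β] [PartialOrder β] [SMul 𝕜 β]
    {f : F → β} {s : Set F} (hf : StrictConvexOn 𝕜 s f) (g : E →ᵃ[𝕜] F)
    (hg : Function.Injective g) : StrictConvexOn 𝕜 (g ⁻¹' s) (f ∘ g) :=
  ⟨hf.1.affine_preimage _, fun x hx y hy hxy a b ha hb hab =>
    calc
      (f ∘ g) (a • x + b • y) = f (a • g x + b • g y) := by
        rw [Function.comp_apply, Convex.combo_affine_apply hab]
      _ < a • f (g x) + b • f (g y) := hf.2 hx hy (hg.ne hxy) ha hb hab⟩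

end

theorem StrictConvexOn.smul {𝕜 E β : Type*} [CommSemiring 𝕜] [PartialOrder 𝕜]
    [AddCommMonoid E] [SMul 𝕜 E]
    [AddCommMonoid β] [PartialOrder β] [Module 𝕜 β] [PosSMulStrictMono 𝕜 β]
    {s : Set E} {f : E → β} {c : 𝕜} (hc : 0 < c) (hf : StrictConvexOn 𝕜 s f) :
    StrictConvexOn 𝕜 s fun x => c • f x :=
  ⟨hf.1, fun x hx y hy hxy a b ha hb hab =>
    calc
      c • f (a • x + b • y) < c • (a • f x + b • f y) :=
        smul_lt_smul_of_pos_left (hf.2 hx hy hxy ha hb hab) hc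
      _ = a • c • f x + b • c • f y := by rw [smul_add, smul_comm c, smul_comm c]⟩

section

variable {E : Type*} [NormedAddCommGroup E] [NormedSpace ℝ E]

theorem norm_combo_rpow_le_combo_norm_rpow {q : ℝ} (hq : 0 ≤ q) (x y : E) {a b : ℝ}
    (ha : 0 ≤ a) (hb : 0 ≤ b) : ‖a • x + b • y‖ ^ q ≤ (a * ‖x‖ + b * ‖y‖) ^ q := by
  refine Real.rpow_le_rpow (norm_nonneg _) ?_ hq
  calc ‖a • x + b • y‖ ≤ ‖a • x‖ + ‖b • y‖ := norm_add_le _ _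
    _ = a * ‖x‖ + b * ‖y‖ := by
      rw [norm_smul, norm_smul, Real.norm_of_nonneg ha, Real.norm_of_nonneg hb]

theorem convexOn_norm_rpow {q : ℝ} (hq : 1 ≤ q) : ConvexOn ℝ univ fun x : E => ‖x‖ ^ q :=
  ⟨convex_univ, fun x _ y _ _ _ ha hb hab =>
    (norm_combo_rpow_le_combo_norm_rpow (zero_le_one.trans hq) x y ha hb).trans
      ((convexOn_rpow hq).2 (norm_nonneg x) (norm_nonneg y) ha hb hab)⟩

/-- For `‖x‖ = ‖y‖` the strict inequality comes from the strict convexity of the norm,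
otherwise from that of `s ↦ s ^ q`. -/
theorem strictConvexOn_norm_rpow [StrictConvexSpace ℝ E] {q : ℝ} (hq : 1 < q) :
    StrictConvexOn ℝ univ fun x : E => ‖x‖ ^ q := by
  refine ⟨convex_univ, fun x _ y _ hxy a b ha hb hab => ?_⟩
  by_cases hn : ‖x‖ = ‖y‖
  · calc ‖a • x + b • y‖ ^ q < ‖x‖ ^ q :=
          Real.rpow_lt_rpow (norm_nonneg _)
            (norm_combo_lt_of_ne le_rfl hn.ge hxy ha hb hab) (zero_lt_one.trans hq)
      _ = a * ‖x‖ ^ q + b * ‖y‖ ^ q := by rw [← hn, ← add_mul, hab, one_mul]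
  · calc ‖a • x + b • y‖ ^ q ≤ (a * ‖x‖ + b * ‖y‖) ^ q :=
          norm_combo_rpow_le_combo_norm_rpow (zero_lt_one.trans hq).le x y ha.le hb.le
      _ < a * ‖x‖ ^ q + b * ‖y‖ ^ q :=
          (strictConvexOn_rpow hq).2 (norm_nonneg x) (norm_nonneg y) hn ha hb hab

end

theorem bregman_projection_objective_convex_general
    {X : Type*} [NormedAddCommGroup X] [NormedSpace ℝ X]
    (q : ℝ) (hq : 1 < q) (N : ℕ) (xs : StrongDual ℝ X)
    (u : Fin N → StrongDual ℝ X) (α : Fin N → ℝ) :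
    ConvexOn ℝ Set.univ (fun t : Fin N → ℝ =>
      (1 / q) * ‖xs - ∑ k, t k • u k‖ ^ q + ∑ k, t k * α k) ∧
    (LinearIndependent ℝ u → StrictConvexSpace ℝ (StrongDual ℝ X) →
      StrictConvexOn ℝ Set.univ (fun t : Fin N → ℝ =>
        (1 / q) * ‖xs - ∑ k, t k • u k‖ ^ q + ∑ k, t k * α k)) := by
  set A : (Fin N → ℝ) →ᵃ[ℝ] StrongDual ℝ X :=
    AffineMap.const ℝ _ xs - (Fintype.linearCombination ℝ u).toAffineMap
  set L := Fintype.linearCombination ℝ α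
  have h_eq : (fun t : Fin N → ℝ => (1 / q) * ‖xs - ∑ k, t k • u k‖ ^ q + ∑ k, t k * α k) =
      fun t => (1 / q) • (fun y => ‖y‖ ^ q) (A t) + L t := by
    ext t
    simp [A, L, Fintype.linearCombination_apply]
  have hq_inv : 0 < 1 / q := by positivity
  rw [h_eq]
  refine ⟨(((convexOn_norm_rpow hq.le).comp_affineMap A).smul hq_inv.le).add
    (L.convexOn convex_univ), fun hu _ => ?_⟩
  have hA : Function.Injective A := fun t t' h =>
    hu.fintypeLinearCombination_injective (by simpa [A] using h)
  exact (((strictConvexOn_norm_rpow hq).comp_affineMap A hA).smul hq_inv).add_convexOn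
    (L.convexOn convex_univ)

/-- The function `h(t) = (1/q)‖x* − Σ_k t_k u_k*‖^q + Σ_k t_k α_k` arising in the
computation of the Bregman projection onto an intersection of hyperplanes is
convex; it is strictly convex if the functionals `u_k*` are linearly independent
and the dual norm is strictly convex. -/
theorem bregman_projection_objective_convex
    {X : Type*} [NormedAddCommGroup X] [NormedSpace ℝ X] [CompleteSpace X]
    (q : ℝ) (hq : 1 < q) (N : ℕ) (xs : StrongDual ℝ X)
    (u : Fin N → StrongDual ℝ X) (α : Fin N → ℝ) :
    ConvexOn ℝ Set.univ (fun t : Fin N → ℝ =>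
      (1 / q) * ‖xs - ∑ k, t k • u k‖ ^ q + ∑ k, t k * α k) ∧
    (LinearIndependent ℝ u → StrictConvexSpace ℝ (StrongDual ℝ X) →
      StrictConvexOn ℝ Set.univ (fun t : Fin N → ℝ =>
        (1 / q) * ‖xs - ∑ k, t k • u k‖ ^ q + ∑ k, t k * α k)) :=
  bregman_projection_objective_convex_general q hq N xs u α
end
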